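/- Let A ⊆ ℝ^d be a discrete set, let N ∈ ℕ, and set P_i = #(A ∩ Q(iN,N)) for i ∈ ℤ^d. Suppose there exist integers t_{i,j} for pairs i,j ∈ ℤ^d with ‖i−j‖_∞ = 1 satisfying: N^d = P_i − Σ_{j:‖i−j‖_∞=1} t_{i,j}, t_{i,j} = −t_{j,i}, and Σ_{j:‖i−j‖_∞=1} |t_{i,j}| ≤ min{P_i, N^d} for all i. Then there exists a bijection σ : A → ℤ^d with sup_{a∈A} ‖a − σ(a)‖_∞ ≤ 3N. -/

import Mathlib

open Set

/-- The half-open cube `Q(b,r)` in `ℝ^d`. -/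
def Qc {d : ℕ} (b : Fin d → ℝ) (r : ℝ) : Set (Fin d → ℝ) :=
  {y | ∀ j, b j ≤ y j ∧ y j < b j + r}

/-- `A` is discrete: its intersection with any ball is finite. -/
def IsDiscreteSet {d : ℕ} (A : Set (Fin d → ℝ)) : Prop :=
  ∀ (x : Fin d → ℝ) (r : ℝ), (A ∩ Metric.ball x r).Finite

/-- `A` is roughly shift-invariant with constant `L` (sup norm). -/
def RSI {d : ℕ} (A : Set (Fin d → ℝ)) (L : ℝ) : Prop :=
  ∀ x : Fin d → ℝ, ∃ σ : A ≃ A, ∀ a : A, ‖(a : Fin d → ℝ) + x - (σ a : Fin d → ℝ)‖ < L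

/-- The neighbors of `i ∈ ℤ^d` in the sup norm: all `j ≠ i` with `‖i-j‖_∞ = 1`. -/
def nbrs {d : ℕ} (i : Fin d → ℤ) : Finset (Fin d → ℤ) :=
  (Fintype.piFinset (fun k => ({i k - 1, i k, i k + 1} : Finset ℤ))).erase i

/-!
Sort the points of `A` and of `ℤ^d` by the cube `Q(iN, N)` containing them: cube `i` holds
`P_i` points of `A` and `N^d` lattice points. Read the positive part of `t_{i,j}` as the number
of points of `A` that cube `i` hands to its neighbour `j`. The hypotheses say that no cube hands
out more than it holds and that afterwards every cube holds exactly `N^d` points, so within each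
cube the points it ends up with can be matched bijectively with its lattice points. Every point
of `A` is thereby sent to a lattice point of its own or of an adjacent cube, at sup distance
less than `2N`.
-/

section Transport

variable {ι : Type*} (nb : ι → Finset ι) (s : ι → ι → ℕ) (c : ι → ℕ)

/-- The `c i` units at `i`: those that stay, and `s i j` units sent to each neighbour `j`.
`Incoming i` has the same units that stay, plus `s j i` units arriving from each neighbour `j`. -/
abbrev Outgoing (i : ι) : Type _ :=
  Fin (c i - ∑ j ∈ nb i, s i j) ⊕ Σ j : nb i, Fin (s i j)

abbrev Incoming (i : ι) : Type _ :=
  Fin (c i - ∑ j ∈ nb i, s i j) ⊕ Σ j : nb i, Fin (s j i)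

theorem card_outgoing {i : ι} (h : ∑ j ∈ nb i, s i j ≤ c i) :
    Nat.card (Outgoing nb s c i) = c i := by
  rw [Nat.card_eq_fintype_card, Fintype.card_sum, Fintype.card_sigma]
  simp only [Fintype.card_fin, Finset.sum_coe_sort (nb i) (s i)]
  omega

theorem card_incoming (i : ι) :
    Nat.card (Incoming nb s c i) = c i - ∑ j ∈ nb i, s i j + ∑ j ∈ nb i, s j i := by
  rw [Nat.card_eq_fintype_card, Fintype.card_sum, Fintype.card_sigma]
  simp only [Fintype.card_fin, Finset.sum_coe_sort (nb i) (s · i)]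

variable {nb}

def transfer (hnb : ∀ {i j}, j ∈ nb i → i ∈ nb j) :
    (Σ i, Outgoing nb s c i) ≃ Σ i, Incoming nb s c i where
  toFun
    | ⟨i, .inl x⟩ => ⟨i, .inl x⟩
    | ⟨i, .inr ⟨j, x⟩⟩ => ⟨j, .inr ⟨⟨i, hnb j.2⟩, x⟩⟩
  invFun
    | ⟨i, .inl x⟩ => ⟨i, .inl x⟩
    | ⟨i, .inr ⟨j, x⟩⟩ => ⟨j, .inr ⟨⟨i, hnb j.2⟩, x⟩⟩
  left_inv := by rintro ⟨i, x | ⟨j, x⟩⟩ <;> rfl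
  right_inv := by rintro ⟨i, x | ⟨j, x⟩⟩ <;> rfl

theorem transfer_fst_eq_or_mem (hnb : ∀ {i j}, j ∈ nb i → i ∈ nb j)
    (q : Σ i, Outgoing nb s c i) :
    (transfer s c hnb q).1 = q.1 ∨ (transfer s c hnb q).1 ∈ nb q.1 := by
  rcases q with ⟨i, x | ⟨j, x⟩⟩
  · exact .inl rfl
  · exact .inr j.2

variable {s} in
theorem exists_equiv_of_flow {α β : Type*} (f : α → ι) (g : β → ι)
    (hnb : ∀ {i j}, j ∈ nb i → i ∈ nb j)
    [∀ i, Finite {a // f a = i}] [∀ i, Finite {b // g b = i}]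
    (hout : ∀ i, ∑ j ∈ nb i, s i j ≤ Nat.card {a // f a = i})
    (hbal : ∀ i, Nat.card {a // f a = i} + ∑ j ∈ nb i, s j i =
      Nat.card {b // g b = i} + ∑ j ∈ nb i, s i j) :
    ∃ σ : α ≃ β, ∀ a, g (σ a) = f a ∨ g (σ a) ∈ nb (f a) := by
  let c : ι → ℕ := fun i => Nat.card {a // f a = i}
  have hsource (i) : Nonempty ({a // f a = i} ≃ Outgoing nb s c i) :=
    Finite.card_eq.1 (card_outgoing nb s c (hout i)).symm
  have htarget (i) : Nonempty (Incoming nb s c i ≃ {b // g b = i}) := by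
    refine Finite.card_eq.1 ?_
    have := hout i
    have := hbal i
    have hc : c i = Nat.card {a // f a = i} := rfl
    rw [card_incoming]
    omega
  let eOut i := (hsource i).some
  let eIn i := (htarget i).some
  let σ : α ≃ β := (Equiv.sigmaFiberEquiv f).symm.trans <| (Equiv.sigmaCongrRight eOut).trans <|
    (transfer s c hnb).trans <| (Equiv.sigmaCongrRight eIn).trans (Equiv.sigmaFiberEquiv g)
  have hσ (a : α) : g (σ a) = (transfer s c hnb ⟨f a, eOut _ ⟨a, rfl⟩⟩).1 :=
    (Equiv.sigmaCongrRight eIn _).2.2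
  exact ⟨σ, fun a => hσ a ▸ transfer_fst_eq_or_mem s c hnb _⟩

theorem Finset.sum_eq_sum_toNat_sub_sum_toNat {S : Finset ι} {t : ι → ι → ℤ} {i : ι}
    (ht : ∀ j ∈ S, t i j = -t j i) :
    ∑ j ∈ S, t i j = ∑ j ∈ S, ((t i j).toNat : ℤ) - ∑ j ∈ S, ((t j i).toNat : ℤ) := by
  rw [← Finset.sum_sub_distrib]
  refine Finset.sum_congr rfl fun j hj => ?_
  have := ht j hj
  omega

end Transport

noncomputable def cubeIndex {d : ℕ} (N : ℕ) (x : Fin d → ℝ) : Fin d → ℤ := fun k => ⌊x k / N⌋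

section Cubes

variable {d N : ℕ}

theorem Int.floor_div_natCast_eq_iff (hN : 0 < N) (a : ℝ) (c : ℤ) :
    ⌊a / N⌋ = c ↔ c * N ≤ a ∧ a < c * N + N := by
  have hN' : (0 : ℝ) < N := by exact_mod_cast hN
  rw [Int.floor_eq_iff, le_div_iff₀ hN', div_lt_iff₀ hN', add_mul, one_mul]

theorem mem_Qc_iff_cubeIndex_eq (hN : 0 < N) (i : Fin d → ℤ) (x : Fin d → ℝ) :
    x ∈ Qc (fun k => (N : ℝ) * i k) N ↔ cubeIndex N x = i := by
  simp only [Qc, Set.mem_ofPred_eq, funext_iff, cubeIndex, Int.floor_div_natCast_eq_iff hN,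
    mul_comm (N : ℝ)]

theorem mem_nbrs_comm {i j : Fin d → ℤ} (h : j ∈ nbrs i) : i ∈ nbrs j := by
  simp only [nbrs, Finset.mem_erase, Fintype.mem_piFinset, Finset.mem_insert,
    Finset.mem_singleton] at h ⊢
  exact ⟨Ne.symm h.1, fun k => by have := h.2 k; omega⟩

theorem abs_sub_le_one_of_mem_nbrs {i j : Fin d → ℤ} (h : j ∈ nbrs i) (k : Fin d) :
    |j k - i k| ≤ 1 := by
  simp only [nbrs, Finset.mem_erase, Fintype.mem_piFinset, Finset.mem_insert,
    Finset.mem_singleton] at h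
  have := h.2 k
  rw [abs_le]
  omega

theorem IsDiscreteSet.finite_inter_Qc {A : Set (Fin d → ℝ)} (hA : IsDiscreteSet A)
    (b : Fin d → ℝ) (r : ℝ) : (A ∩ Qc b r).Finite := by
  refine (hA b (|r| + 1)).subset fun y ⟨hy, hq⟩ => ⟨hy, ?_⟩
  rw [Metric.mem_ball, dist_pi_lt_iff (by positivity)]
  intro k
  rw [Real.dist_eq, abs_lt]
  constructor <;> linarith [hq k, le_abs_self r]

theorem card_cubeIndex_fiber_int (hN : 0 < N) (i : Fin d → ℤ) :
    Nat.card {m : Fin d → ℤ // cubeIndex N (fun k => (m k : ℝ)) = i} = N ^ d := by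
  have hfiber (c : ℤ) : Nat.card {z : ℤ // ⌊(z : ℝ) / N⌋ = c} = N := by
    have hIco : {z : ℤ | ⌊(z : ℝ) / N⌋ = c} = Set.Ico (c * N) (c * N + N) := by
      ext z
      simp only [Set.mem_ofPred_eq, Set.mem_Ico, Int.floor_div_natCast_eq_iff hN]
      norm_cast
    have hcard := Int.card_fintype_Ico_of_le (c * N) (c * N + N) (by omega)
    rw [← Set.coe_ofPred, hIco, Nat.card_eq_fintype_card]
    omega
  have e : {m : Fin d → ℤ // cubeIndex N (fun k => (m k : ℝ)) = i} ≃
      ∀ k, {z : ℤ // ⌊(z : ℝ) / N⌋ = i k} :=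
    (Equiv.subtypeEquivRight fun _ => funext_iff).trans
      (Equiv.subtypePiEquivPi (p := fun k (z : ℤ) => ⌊(z : ℝ) / N⌋ = i k))
  rw [Nat.card_congr e, Nat.card_pi]
  simp [hfiber]

theorem norm_sub_le_of_cubeIndex (hN : 0 < N) {x y : Fin d → ℝ}
    (h : cubeIndex N y = cubeIndex N x ∨ cubeIndex N y ∈ nbrs (cubeIndex N x)) :
    ‖x - y‖ ≤ 2 * N := by
  rw [pi_norm_le_iff_of_nonneg (by positivity)]
  intro k
  have hx := (Int.floor_div_natCast_eq_iff hN (x k) (cubeIndex N x k)).1 rfl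
  have hy := (Int.floor_div_natCast_eq_iff hN (y k) (cubeIndex N y k)).1 rfl
  have hadj : |(cubeIndex N y k : ℝ) - cubeIndex N x k| ≤ 1 := by
    rcases h with h | h
    · simp [h]
    · exact_mod_cast abs_sub_le_one_of_mem_nbrs h k
  rw [Pi.sub_apply, Real.norm_eq_abs, abs_le]
  rw [abs_le] at hadj
  constructor <;> nlinarith [hx, hy, hadj]

def cubeIndexFiberEquiv (hN : 0 < N) (A : Set (Fin d → ℝ)) (i : Fin d → ℤ) :
    {a : A // cubeIndex N a = i} ≃ ↥(A ∩ Qc (fun k => (N : ℝ) * i k) N) :=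
  (Equiv.subtypeSubtypeEquivSubtypeInter (· ∈ A) (cubeIndex N · = i)).trans <|
    Equiv.subtypeEquivRight fun x => and_congr_right' (mem_Qc_iff_cubeIndex_eq hN i x).symm

theorem IsDiscreteSet.finite_cubeIndex_fiber {A : Set (Fin d → ℝ)} (hA : IsDiscreteSet A)
    (hN : 0 < N) (i : Fin d → ℤ) : Finite {a : A // cubeIndex N a = i} :=
  have := (hA.finite_inter_Qc (fun k => (N : ℝ) * i k) N).to_subtype
  .of_equiv _ (cubeIndexFiberEquiv hN A i).symm

theorem card_cubeIndex_fiber (hN : 0 < N) (A : Set (Fin d → ℝ)) (i : Fin d → ℤ) :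
    Nat.card {a : A // cubeIndex N a = i} = (A ∩ Qc (fun k => (N : ℝ) * i k) N).ncard := by
  rw [← Nat.card_coe_set_eq, Nat.card_congr (cubeIndexFiberEquiv hN A i)]

end Cubes

theorem stmt11 {d : ℕ} (A : Set (Fin d → ℝ)) (hdisc : IsDiscreteSet A)
    (N : ℕ) (hN : 0 < N)
    (t : (Fin d → ℤ) → (Fin d → ℤ) → ℤ)
    (ht1 : ∀ i : Fin d → ℤ,
      ((N : ℤ) ^ d) = ((A ∩ Qc (fun k => (N : ℝ) * i k) N).ncard : ℤ) - ∑ j ∈ nbrs i, t i j)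
    (ht2 : ∀ i : Fin d → ℤ, ∀ j ∈ nbrs i, t i j = - t j i)
    (ht3 : ∀ i : Fin d → ℤ,
      ∑ j ∈ nbrs i, |t i j| ≤ min ((A ∩ Qc (fun k => (N : ℝ) * i k) N).ncard : ℤ) ((N : ℤ) ^ d)) :
    ∃ σ : A ≃ (Fin d → ℤ),
      ∀ a : A, ‖(a : Fin d → ℝ) - (fun k => ((σ a k : ℤ) : ℝ))‖ ≤ 3 * N := by
  have := hdisc.finite_cubeIndex_fiber hN
  have (i : Fin d → ℤ) : Finite {m : Fin d → ℤ // cubeIndex N (fun k => (m k : ℝ)) = i} :=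
    Nat.finite_of_card_ne_zero (by rw [card_cubeIndex_fiber_int hN]; positivity)
  have hout (i) : ∑ j ∈ nbrs i, (t i j).toNat ≤ Nat.card {a : A // cubeIndex N a = i} := by
    have hle : ∑ j ∈ nbrs i, ((t i j).toNat : ℤ) ≤ ∑ j ∈ nbrs i, |t i j| :=
      Finset.sum_le_sum fun j _ => by rw [Int.abs_eq_natAbs]; omega
    rw [card_cubeIndex_fiber hN]
    exact_mod_cast hle.trans ((ht3 i).trans (min_le_left _ _))
  have hbal (i) : Nat.card {a : A // cubeIndex N a = i} + ∑ j ∈ nbrs i, (t j i).toNat =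
      Nat.card {m : Fin d → ℤ // cubeIndex N (fun k => (m k : ℝ)) = i} +
        ∑ j ∈ nbrs i, (t i j).toNat := by
    rw [card_cubeIndex_fiber hN, card_cubeIndex_fiber_int hN]
    zify
    linarith [ht1 i, Finset.sum_eq_sum_toNat_sub_sum_toNat (ht2 i)]
  obtain ⟨σ, hσ⟩ := exists_equiv_of_flow (nb := nbrs) (s := fun i j => (t i j).toNat)
    (fun a : A => cubeIndex N (a : Fin d → ℝ))
    (fun m : Fin d → ℤ => cubeIndex N (fun k => (m k : ℝ))) mem_nbrs_comm hout hbal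
  exact ⟨σ, fun a => (norm_sub_le_of_cubeIndex hN (hσ a)).trans (by gcongr; norm_num)⟩
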